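/- arXiv:1605.07679 — 3 statements merged into one kernel-verified Lean document; each statement's English description precedes it below -/
import Mathlib

section
/- Let D, N ≥ 1 and for each j let L_j, R_{jl} ≥ 1 with D > ∑_{j=1}^N ∏_{l=1}^{L_j} R_{jl} − N. Suppose J is a D×D real matrix of the form J = ∑_{j=1}^N ∑_{s∈S_j} (1/q_j^{(s)}) · (∇q_j^{(s)})(∇q_j^{(s)})^T, where for each j the set S_j has cardinality ∏_{l=1}^{L_j} R_{jl}, each q_j^{(s)} > 0, and ∑_{s∈S_j} ∇q_j^{(s)} = 0 in ℝ^D. Then J is singular. -/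
open Matrix in
theorem FIM_singular_of_dim_gt_IDQD (D N : ℕ) (hD : 1 ≤ D) (hN : 1 ≤ N)
    (L : Fin N → ℕ) (hL : ∀ j, 1 ≤ L j)
    (R : (j : Fin N) → Fin (L j) → ℕ) (hR : ∀ j l, 1 ≤ R j l)
    (hdim : (∑ j, ∏ l, (R j l : ℤ)) - N < D)
    (S : Fin N → Type) [∀ j, Fintype (S j)]
    (hcard : ∀ j, Fintype.card (S j) = ∏ l, R j l)
    (q : (j : Fin N) → S j → ℝ) (hq : ∀ j s, 0 < q j s)
    (g : (j : Fin N) → S j → (Fin D → ℝ))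
    (hg : ∀ j, ∑ s, g j s = 0)
    (J : Matrix (Fin D) (Fin D) ℝ)
    (hJ : J = ∑ j, ∑ s, (1 / q j s) • Matrix.vecMulVec (g j s) (g j s)) :
    J.det = 0 := by
  classical
  -- each S j is nonempty
  have hcardpos : ∀ j, 1 ≤ Fintype.card (S j) := by
    intro j
    rw [hcard j]
    exact Finset.one_le_prod' fun l _ => hR j l
  have hne : ∀ j, Nonempty (S j) := fun j => Fintype.card_pos_iff.mp (hcardpos j)
  have s0 : ∀ j, S j := fun j => (hne j).some
  -- the span of the gradients, generated by the non-basepoint ones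
  set W : Submodule ℝ (Fin D → ℝ) :=
    Submodule.span ℝ
      (Set.range fun p : Σ j : Fin N, {s : S j // s ≠ s0 j} => g p.1 p.2.1) with hW
  have hmem : ∀ j s, g j s ∈ W := by
    intro j s
    by_cases hs : s = s0 j
    · have h0 : g j s + ∑ t ∈ Finset.univ.erase s, g j t = 0 := by
        rw [Finset.add_sum_erase _ _ (Finset.mem_univ s)]
        exact hg j
      have hgs : g j s = -∑ t ∈ Finset.univ.erase s, g j t := by
        rw [eq_neg_iff_add_eq_zero]; exact h0
      rw [hgs]
      refine Submodule.neg_mem _ (Submodule.sum_mem _ fun t ht => ?_)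
      have htne : t ≠ s0 j := hs ▸ (Finset.mem_erase.mp ht).1
      exact Submodule.subset_span ⟨⟨j, ⟨t, htne⟩⟩, rfl⟩
    · exact Submodule.subset_span ⟨⟨j, ⟨s, hs⟩⟩, rfl⟩
  -- dimension count
  have hcards : ∀ j, Fintype.card {s : S j // s ≠ s0 j} = Fintype.card (S j) - 1 := by
    intro j
    simp [Fintype.card_subtype_compl]
  have hcardι : Fintype.card (Σ j : Fin N, {s : S j // s ≠ s0 j})
      = ∑ j, (Fintype.card (S j) - 1) := by
    rw [Fintype.card_sigma]
    exact Finset.sum_congr rfl fun j _ => hcards j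
  have hcardιZ : (Fintype.card (Σ j : Fin N, {s : S j // s ≠ s0 j}) : ℤ)
      = (∑ j, ∏ l, (R j l : ℤ)) - N := by
    rw [hcardι]
    have key : ∀ j : Fin N, ((Fintype.card (S j) - 1 : ℕ) : ℤ)
        = (∏ l, (R j l : ℤ)) - 1 := by
      intro j
      rw [Nat.cast_sub (hcardpos j), hcard j]
      push_cast
      ring
    rw [Nat.cast_sum]
    simp_rw [key]
    rw [Finset.sum_sub_distrib]
    simp
  have hrank : Module.finrank ℝ W < D := by
    have h1 : Module.finrank ℝ W ≤ Fintype.card (Σ j : Fin N, {s : S j // s ≠ s0 j}) :=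
      finrank_range_le_card _
    have h2 : (Fintype.card (Σ j : Fin N, {s : S j // s ≠ s0 j}) : ℤ) < D := by
      rw [hcardιZ]; exact hdim
    have h3 : Fintype.card (Σ j : Fin N, {s : S j // s ≠ s0 j}) < D := by exact_mod_cast h2
    omega
  have hWlt : W < ⊤ := by
    rcases lt_or_eq_of_le (le_top : W ≤ ⊤) with h | h
    · exact h
    · exfalso
      have : Module.finrank ℝ W = D := by
        rw [h, finrank_top, Module.finrank_pi ℝ, Fintype.card_fin]
      omega
  -- a nonzero functional vanishing on W
  obtain ⟨φ, hφne, hφ⟩ := W.exists_dual_map_eq_bot_of_lt_top hWlt inferInstance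
  have hφ0 : ∀ x ∈ W, φ x = 0 := by
    intro x hx
    have : φ x ∈ W.map φ := Submodule.mem_map_of_mem hx
    rw [hφ] at this
    simpa using this
  set v : Fin D → ℝ := fun i => φ (fun k => if i = k then 1 else 0) with hv
  have hrep : ∀ x : Fin D → ℝ, φ x = x ⬝ᵥ v := by
    intro x
    rw [LinearMap.pi_apply_eq_sum_univ φ x]
    simp [dotProduct, hv, smul_eq_mul]
  have hvne : v ≠ 0 := by
    intro h0
    apply hφne
    refine LinearMap.ext fun x => ?_
    rw [hrep x, h0]
    simp
  have hgv : ∀ j s, g j s ⬝ᵥ v = 0 := fun j s => by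
    rw [← hrep]; exact hφ0 _ (hmem j s)
  have hmul : J.mulVec v = 0 := by
    rw [hJ]
    funext i
    simp only [Matrix.mulVec, dotProduct, Matrix.sum_apply,
      Pi.smul_apply, Matrix.smul_apply, Matrix.vecMulVec_apply, Pi.zero_apply,
      smul_eq_mul]
    calc (∑ k, (∑ j, ∑ s, 1 / q j s * (g j s i * g j s k)) * v k)
        = ∑ j, ∑ s, ∑ k, 1 / q j s * g j s i * (g j s k * v k) := by
          simp_rw [Finset.sum_mul]
          rw [Finset.sum_comm]
          refine Finset.sum_congr rfl fun j _ => ?_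
          rw [Finset.sum_comm]
          exact Finset.sum_congr rfl fun s _ =>
            Finset.sum_congr rfl fun k _ => by ring
      _ = ∑ j, ∑ s, 1 / q j s * g j s i * (g j s ⬝ᵥ v) := by
          simp_rw [dotProduct, Finset.mul_sum]
      _ = 0 := by simp [hgv]
  exact Matrix.exists_mulVec_eq_zero_iff.mp ⟨v, hvne, hmul⟩
end

section
/- Fix real numbers a < b and fix (α_0, β_0) with β_0 > 0. For every ρ ∈ (0, 1) there exists α_ρ ∈ ℝ such that g(α_ρ, ρβ_0) = g(α_0, β_0), where g(α, β) = ∫_a^b (1/√(2πβ)) exp(−(x−α)²/(2β)) dx. Consequently, for the binary quantizer with regions I^{(1)} = (a,b) and I^{(2)} = ℝ \ (a,b), every parameter point (α_0, β_0) has uncountably many observationally equivalent parameter points. -/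
/-!
Standardizing, `g (α, β) = Φ ((b - α) / √β) - Φ ((a - α) / √β)` with `Φ` the standard normal
cdf. For a variance `β < β₀`, shifting `α` so that the left endpoint keeps its standardized
position widens the standardized window, so there `g (·, β) ≥ g (α₀, β₀)`; as `α → ∞` the window
escapes to `-∞` and `g (α, β) → 0 < g (α₀, β₀)`. The intermediate value theorem gives `α` with
`g (α, β) = g (α₀, β₀)`, and the uncountably many `β ∈ (0, β₀)` give uncountably many such points.
-/

open Real ProbabilityTheory MeasureTheory Filter Set NNReal Topology

/-- For a cdf `F`, the mass that the location-scale law `F ((· - α) / σ)` gives to `(a, b]`;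
with `F` the standard normal cdf this is the paper's `g (α, σ ^ 2)`. -/
noncomputable def locScaleMass (F : ℝ → ℝ) (a b α σ : ℝ) : ℝ := F ((b - α) / σ) - F ((a - α) / σ)

section LocScale

variable {F : ℝ → ℝ} {a b σ σ₀ : ℝ}

lemma continuous_locScaleMass (hF : Continuous F) :
    Continuous fun α => locScaleMass F a b α σ := by
  unfold locScaleMass; fun_prop

lemma tendsto_locScaleMass_atTop (hF : Tendsto F atBot (𝓝 0)) (hσ : 0 < σ) :
    Tendsto (fun α => locScaleMass F a b α σ) atTop (𝓝 0) := by
  have h (c : ℝ) : Tendsto (fun α => F ((c - α) / σ)) atTop (𝓝 0) := by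
    refine hF.comp (Tendsto.atBot_div_const hσ ?_)
    exact (tendsto_atBot_add_const_left _ c tendsto_neg_atTop_atBot).congr
      fun α => (sub_eq_add_neg c α).symm
  simpa only [locScaleMass, sub_zero] using (h b).sub (h a)

lemma locScaleMass_pos (hF : StrictMono F) (hab : a < b) (hσ : 0 < σ) (α : ℝ) :
    0 < locScaleMass F a b α σ :=
  sub_pos.2 (hF (div_lt_div_of_pos_right (by linarith) hσ))

lemma locScaleMass_le_of_scale_le (hF : Monotone F) (hab : a ≤ b) (hσ : 0 < σ)
    (hσσ₀ : σ ≤ σ₀) (α₀ : ℝ) :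
    locScaleMass F a b α₀ σ₀ ≤ locScaleMass F a b (a - (a - α₀) / σ₀ * σ) σ := by
  have hσ₀ : 0 < σ₀ := hσ.trans_le hσσ₀
  have hleft : (a - (a - (a - α₀) / σ₀ * σ)) / σ = (a - α₀) / σ₀ := by
    field_simp; ring
  have hright : (b - α₀) / σ₀ ≤ (b - (a - (a - α₀) / σ₀ * σ)) / σ := by
    have hwidth : (b - a) / σ₀ ≤ (b - a) / σ := div_le_div_of_nonneg_left (by linarith) hσ hσσ₀
    calc (b - α₀) / σ₀ = (a - α₀) / σ₀ + (b - a) / σ₀ := by ring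
      _ ≤ (a - α₀) / σ₀ + (b - a) / σ := by linarith
      _ = _ := by field_simp; ring
  unfold locScaleMass
  rw [hleft]
  linarith [hF hright]

lemma exists_locScaleMass_eq (hFc : Continuous F) (hF : StrictMono F)
    (hF0 : Tendsto F atBot (𝓝 0)) (hab : a < b) (hσ : 0 < σ) (hσσ₀ : σ ≤ σ₀) (α₀ : ℝ) :
    ∃ α, locScaleMass F a b α σ = locScaleMass F a b α₀ σ₀ := by
  have hT := locScaleMass_pos hF hab (hσ.trans_le hσσ₀) α₀
  obtain ⟨α₂, hα₂⟩ := ((tendsto_locScaleMass_atTop hF0 hσ).eventually (gt_mem_nhds hT)).exists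
  have hα₁ := locScaleMass_le_of_scale_le hF.monotone hab.le hσ hσσ₀ α₀
  obtain ⟨α, -, hα⟩ := intermediate_value_uIcc (continuous_locScaleMass hFc).continuousOn
    (mem_uIcc.2 (Or.inr ⟨hα₂.le, hα₁⟩))
  exact ⟨α, hα⟩

end LocScale

section Gaussian

variable (μ : ℝ) {v : ℝ≥0}

lemma cdf_gaussianReal_sub_cdf (hv : v ≠ 0) (s t : ℝ) :
    cdf (gaussianReal μ v) t - cdf (gaussianReal μ v) s = ∫ x in s..t, gaussianPDFReal μ v x := by
  wlog hst : s ≤ t generalizing s t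
  · rw [intervalIntegral.integral_symm, ← this t s (le_of_not_ge hst), neg_sub]
  refine (ENNReal.ofReal_eq_ofReal_iff (sub_nonneg.2 (monotone_cdf _ hst))
    (intervalIntegral.integral_nonneg hst fun x _ => gaussianPDFReal_nonneg _ _ _)).1 ?_
  rw [← StieltjesFunction.measure_Ioc, measure_cdf, gaussianReal_apply_eq_integral _ hv,
    intervalIntegral.integral_of_le hst]

lemma continuous_cdf_gaussianReal (hv : v ≠ 0) : Continuous (cdf (gaussianReal μ v)) := by
  have h : cdf (gaussianReal μ v) =
      fun t => cdf (gaussianReal μ v) 0 + ∫ x in 0..t, gaussianPDFReal μ v x := by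
    ext t; rw [← cdf_gaussianReal_sub_cdf μ hv]; ring
  rw [h]
  exact continuous_const.add ((integrable_gaussianPDFReal μ v).continuous_primitive 0)

lemma strictMono_cdf_gaussianReal (hv : v ≠ 0) : StrictMono (cdf (gaussianReal μ v)) :=
  fun s t hst => by
    rw [← sub_pos, cdf_gaussianReal_sub_cdf μ hv]
    exact intervalIntegral.intervalIntegral_pos_of_pos
      (integrable_gaussianPDFReal μ v).intervalIntegrable (gaussianPDFReal_pos μ v · hv) hst

lemma gaussianReal_zero_one_map_affine :
    (gaussianReal 0 1).map (fun y => √v * y + μ) = gaussianReal μ v := by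
  have : (fun y => √v * y + μ) = (· + μ) ∘ (√v * ·) := rfl
  rw [this, ← Measure.map_map (by fun_prop) (by fun_prop), gaussianReal_map_const_mul,
    gaussianReal_map_add_const]
  congr
  · simp
  · ext; simp

lemma cdf_gaussianReal_eq_cdf_std (hv : v ≠ 0) (x : ℝ) :
    cdf (gaussianReal μ v) x = cdf (gaussianReal 0 1) ((x - μ) / √v) := by
  have hσ : 0 < √(v : ℝ) := Real.sqrt_pos.2 (NNReal.coe_pos.2 (pos_iff_ne_zero.2 hv))
  rw [cdf_eq_real, cdf_eq_real, ← gaussianReal_zero_one_map_affine μ,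
    map_measureReal_apply (by fun_prop) measurableSet_Iic]
  congr 1
  ext y
  simp [le_div_iff₀ hσ, le_sub_iff_add_le, mul_comm]

lemma integral_gaussianPDFReal_eq_locScaleMass (a b : ℝ) (hv : v ≠ 0) :
    ∫ x in a..b, gaussianPDFReal μ v x = locScaleMass (cdf (gaussianReal 0 1)) a b μ √v := by
  rw [← cdf_gaussianReal_sub_cdf μ hv, cdf_gaussianReal_eq_cdf_std μ hv,
    cdf_gaussianReal_eq_cdf_std μ hv]
  rfl

end Gaussian

theorem every_point_nonidentifiable (a b : ℝ) (hab : a < b)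
    (α₀ β₀ : ℝ) (hβ₀ : 0 < β₀)
    (g : ℝ → ℝ → ℝ)
    (hg : ∀ α β, g α β =
      ∫ x in a..b, (Real.sqrt (2 * π * β))⁻¹ * Real.exp (-(x - α) ^ 2 / (2 * β))) :
    (∀ ρ ∈ Set.Ioo (0 : ℝ) 1, ∃ αρ : ℝ, g αρ (ρ * β₀) = g α₀ β₀) ∧
    ¬ Set.Countable {p : ℝ × ℝ | 0 < p.2 ∧ g p.1 p.2 = g α₀ β₀ ∧ p ≠ (α₀, β₀)} := by
  have hg_std (α : ℝ) {β : ℝ} (hβ : 0 < β) :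
      g α β = locScaleMass (cdf (gaussianReal 0 1)) a b α √β := by
    rw [hg]
    exact integral_gaussianPDFReal_eq_locScaleMass α a b (v := ⟨β, hβ.le⟩) (ne_of_gt hβ)
  have hsmaller : ∀ β ∈ Ioo 0 β₀, ∃ α, g α β = g α₀ β₀ := by
    rintro β ⟨hβ, hββ₀⟩
    obtain ⟨α, hα⟩ := exists_locScaleMass_eq (continuous_cdf_gaussianReal 0 one_ne_zero)
      (strictMono_cdf_gaussianReal 0 one_ne_zero) (tendsto_cdf_atBot _) hab
      (sqrt_pos.2 hβ) (sqrt_le_sqrt hββ₀.le) α₀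
    exact ⟨α, by rw [hg_std α hβ, hg_std α₀ hβ₀, hα]⟩
  refine ⟨fun ρ ⟨hρ0, hρ1⟩ => hsmaller _ ⟨mul_pos hρ0 hβ₀, by nlinarith⟩,
    fun hS => (Cardinal.Real.Ioo_countable_iff.1 ((hS.image Prod.snd).mono ?_)).not_gt hβ₀⟩
  intro β hβ
  obtain ⟨α, hα⟩ := hsmaller β hβ
  exact ⟨(α, β), ⟨hβ.1, hα, fun h => hβ.2.ne (congrArg Prod.snd h)⟩, rfl⟩
end

section
/- Fix reals a_1 < b_1 and a_2 < b_2 and define g(θ_1, θ_2) = ln ∫_{a_1}^{b_1} (1/√(2π)) e^{−(x−θ_1)²/2} dx + ln ∫_{a_2}^{b_2} (1/√(2π)) e^{−(x−θ_2)²/2} dx on ℝ². Then g is concave and attains its unique global maximum at θ* = ((a_1+b_1)/2, (a_2+b_2)/2). Consequently, the parameter point θ* is identifiable under the binary quantizer with region I^{(1)} = (a_1,b_1) × (a_2,b_2): no other θ ∈ ℝ² satisfies g(θ) = g(θ*). -/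
/-!
Up to the constant factor `(√(2π))⁻¹`, each factor of the likelihood is
`W(θ) = ∫_{a-θ}^{b-θ} e^{-u²/2} du`. Writing `α = a - θ`, `β = b - θ`, we get
`W' = e^{-α²/2} - e^{-β²/2} = ∫_α^β u e^{-u²/2} du` and `W'' = α e^{-α²/2} - β e^{-β²/2}`.
Log-concavity `W'' W ≤ W'²` holds because the mean `W'/W` of the Gaussian truncated to `[α, β]`
lies in `[α, β]`. Since `W' > 0` left of the midpoint `(a + b)/2` and `W' < 0` right of it, the
midpoint is the strict maximizer; `g` is the sum of such a function of `θ₁` and one of `θ₂`.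
-/

open Real MeasureTheory Set

noncomputable section

def gaussianKernel (u : ℝ) : ℝ := exp (-u ^ 2 / 2)

lemma gaussianKernel_pos (u : ℝ) : 0 < gaussianKernel u := exp_pos _

lemma continuous_gaussianKernel : Continuous gaussianKernel := by
  unfold gaussianKernel; fun_prop

lemma hasDerivAt_gaussianKernel (u : ℝ) :
    HasDerivAt gaussianKernel (-u * gaussianKernel u) u := by
  refine (((hasDerivAt_pow 2 u).fun_neg.div_const 2).exp).congr_deriv ?_
  rw [gaussianKernel]
  ring

lemma gaussianKernel_lt_gaussianKernel {x y : ℝ} :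
    gaussianKernel x < gaussianKernel y ↔ y ^ 2 < x ^ 2 := by
  rw [gaussianKernel, gaussianKernel, exp_lt_exp]
  constructor <;> intro h <;> linarith

lemma integral_id_mul_gaussianKernel (α β : ℝ) :
    ∫ u in α..β, u * gaussianKernel u = gaussianKernel α - gaussianKernel β := by
  have h (u : ℝ) : HasDerivAt (fun u => -gaussianKernel u) (u * gaussianKernel u) u := by
    simpa using (hasDerivAt_gaussianKernel u).fun_neg
  rw [intervalIntegral.integral_eq_sub_of_hasDerivAt (fun u _ => h u)
    ((continuous_id.mul continuous_gaussianKernel).intervalIntegrable _ _)]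
  ring

lemma integral_id_mul_mem_Icc {f : ℝ → ℝ} {α β : ℝ} (hαβ : α ≤ β)
    (hf : IntervalIntegrable f volume α β) (hf₀ : ∀ u ∈ Icc α β, 0 ≤ f u) :
    ∫ u in α..β, u * f u ∈ Icc (α * ∫ u in α..β, f u) (β * ∫ u in α..β, f u) := by
  have hid : IntervalIntegrable (fun u => u * f u) volume α β :=
    hf.continuousOn_mul continuousOn_id
  rw [← intervalIntegral.integral_const_mul, ← intervalIntegral.integral_const_mul]
  exact ⟨intervalIntegral.integral_mono_on hαβ (hf.const_mul α) hid fun u hu =>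
      mul_le_mul_of_nonneg_right hu.1 (hf₀ u hu),
    intervalIntegral.integral_mono_on hαβ hid (hf.const_mul β) fun u hu =>
      mul_le_mul_of_nonneg_right hu.2 (hf₀ u hu)⟩

lemma mul_integral_gaussianKernel_le {α β : ℝ} (hαβ : α ≤ β) :
    (α * gaussianKernel α - β * gaussianKernel β) * ∫ u in α..β, gaussianKernel u ≤
      (gaussianKernel α - gaussianKernel β) ^ 2 := by
  have hmean := integral_id_mul_mem_Icc hαβ (continuous_gaussianKernel.intervalIntegrable _ _)
    fun u _ => (gaussianKernel_pos u).le
  rw [integral_id_mul_gaussianKernel] at hmean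
  nlinarith [mul_nonneg (gaussianKernel_pos α).le (sub_nonneg.2 hmean.1),
    mul_nonneg (gaussianKernel_pos β).le (sub_nonneg.2 hmean.2)]

def windowMass (a b θ : ℝ) : ℝ := ∫ u in (a - θ)..(b - θ), gaussianKernel u

lemma windowMass_pos {a b : ℝ} (hab : a < b) (θ : ℝ) : 0 < windowMass a b θ :=
  intervalIntegral.intervalIntegral_pos_of_pos (continuous_gaussianKernel.intervalIntegrable _ _)
    gaussianKernel_pos (by linarith)

lemma hasDerivAt_windowMass (a b θ : ℝ) :
    HasDerivAt (windowMass a b) (gaussianKernel (a - θ) - gaussianKernel (b - θ)) θ := by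
  set F : ℝ → ℝ := fun t => ∫ u in (0 : ℝ)..t, gaussianKernel u
  have hF (c : ℝ) : HasDerivAt (fun θ => F (c - θ)) (-gaussianKernel (c - θ)) θ := by
    simpa [Function.comp_def] using
      (continuous_gaussianKernel.integral_hasStrictDerivAt 0 (c - θ)).hasDerivAt.comp θ
        ((hasDerivAt_id θ).const_sub c)
  have hW : windowMass a b = fun θ => F (b - θ) - F (a - θ) := by
    ext θ
    have hint (x y : ℝ) := continuous_gaussianKernel.intervalIntegrable (μ := volume) x y
    exact (intervalIntegral.integral_interval_sub_left (hint _ _) (hint _ _)).symm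
  rw [hW]
  exact ((hF b).fun_sub (hF a)).congr_deriv (by ring)

lemma hasDerivAt_windowMass_deriv (a b θ : ℝ) :
    HasDerivAt (fun θ => gaussianKernel (a - θ) - gaussianKernel (b - θ))
      ((a - θ) * gaussianKernel (a - θ) - (b - θ) * gaussianKernel (b - θ)) θ := by
  have h (c : ℝ) : HasDerivAt (fun θ => gaussianKernel (c - θ))
      ((c - θ) * gaussianKernel (c - θ)) θ :=
    ((hasDerivAt_gaussianKernel (c - θ)).comp θ
      ((hasDerivAt_id θ).const_sub c)).congr_deriv (by ring)
  exact (h a).sub (h b)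

lemma concaveOn_log_windowMass {a b : ℝ} (hab : a < b) :
    ConcaveOn ℝ univ fun θ => log (windowMass a b θ) := by
  have hlog (θ : ℝ) := (hasDerivAt_windowMass a b θ).log (windowMass_pos hab θ).ne'
  refine concaveOn_of_hasDerivWithinAt2_nonpos convex_univ
    (fun θ _ => (hlog θ).continuousAt.continuousWithinAt) (fun θ _ => (hlog θ).hasDerivWithinAt)
    (fun θ _ => ((hasDerivAt_windowMass_deriv a b θ).div (hasDerivAt_windowMass a b θ)
      (windowMass_pos hab θ).ne').hasDerivWithinAt) fun θ _ => ?_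
  refine div_nonpos_of_nonpos_of_nonneg ?_ (sq_nonneg _)
  have hkey := mul_integral_gaussianKernel_le (show a - θ ≤ b - θ by linarith)
  rw [← windowMass] at hkey
  nlinarith

lemma lt_of_ne_of_hasDerivAt_pos_of_neg {f f' : ℝ → ℝ} {m t : ℝ}
    (hf : ∀ x, HasDerivAt f (f' x) x) (hleft : ∀ x < m, 0 < f' x)
    (hright : ∀ x, m < x → f' x < 0) (ht : t ≠ m) : f t < f m := by
  have hcont : Continuous f := continuous_iff_continuousAt.2 fun x => (hf x).continuousAt
  rcases ht.lt_or_gt with h | h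
  · refine strictMonoOn_of_hasDerivWithinAt_pos (convex_Iic m) hcont.continuousOn
      (fun x _ => (hf x).hasDerivWithinAt) (fun x hx => hleft x ?_) h.le (mem_Iic.2 le_rfl) h
    simpa using hx
  · refine strictAntiOn_of_hasDerivWithinAt_neg (convex_Ici m) hcont.continuousOn
      (fun x _ => (hf x).hasDerivWithinAt) (fun x hx => hright x ?_) (mem_Ici.2 le_rfl) h.le h
    simpa using hx

lemma windowMass_lt_windowMass_midpoint {a b t : ℝ} (hab : a < b) (ht : t ≠ (a + b) / 2) :
    windowMass a b t < windowMass a b ((a + b) / 2) := by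
  refine lt_of_ne_of_hasDerivAt_pos_of_neg (hasDerivAt_windowMass a b) (fun x hx => ?_)
    (fun x hx => ?_) ht
  · rw [sub_pos, gaussianKernel_lt_gaussianKernel]; nlinarith
  · rw [sub_neg, gaussianKernel_lt_gaussianKernel]; nlinarith

def logGaussianIntervalProb (a b θ : ℝ) : ℝ :=
  log (∫ x in a..b, (√(2 * π))⁻¹ * exp (-(x - θ) ^ 2 / 2))

lemma logGaussianIntervalProb_eq {a b : ℝ} (hab : a < b) (θ : ℝ) :
    logGaussianIntervalProb a b θ = log (√(2 * π))⁻¹ + log (windowMass a b θ) := by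
  have hc : (√(2 * π))⁻¹ ≠ 0 := by positivity
  have hW : ∫ x in a..b, exp (-(x - θ) ^ 2 / 2) = windowMass a b θ :=
    intervalIntegral.integral_comp_sub_right gaussianKernel θ
  rw [logGaussianIntervalProb, intervalIntegral.integral_const_mul, hW,
    log_mul hc (windowMass_pos hab θ).ne']

lemma concaveOn_logGaussianIntervalProb {a b : ℝ} (hab : a < b) :
    ConcaveOn ℝ univ (logGaussianIntervalProb a b) := by
  simp_rw [funext (logGaussianIntervalProb_eq hab)]
  exact (concaveOn_log_windowMass hab).add_const _ |>.congr fun _ _ => add_comm _ _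

lemma logGaussianIntervalProb_lt_midpoint {a b t : ℝ} (hab : a < b) (ht : t ≠ (a + b) / 2) :
    logGaussianIntervalProb a b t < logGaussianIntervalProb a b ((a + b) / 2) := by
  rw [logGaussianIntervalProb_eq hab, logGaussianIntervalProb_eq hab]
  gcongr
  · exact windowMass_pos hab t
  · exact windowMass_lt_windowMass_midpoint hab ht


lemma add_lt_add_of_ne_of_isStrictMax {α β M : Type*} [AddCommMonoid M] [PartialOrder M]
    [IsOrderedCancelAddMonoid M] {f₁ : α → M} {f₂ : β → M} {m₁ : α} {m₂ : β}
    (h₁ : ∀ t, t ≠ m₁ → f₁ t < f₁ m₁) (h₂ : ∀ t, t ≠ m₂ → f₂ t < f₂ m₂) {θ : α × β}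
    (hθ : θ ≠ (m₁, m₂)) : f₁ θ.1 + f₂ θ.2 < f₁ m₁ + f₂ m₂ := by
  have hle₂ : f₂ θ.2 ≤ f₂ m₂ := by
    rcases eq_or_ne θ.2 m₂ with h | h
    · rw [h]
    · exact (h₂ _ h).le
  rcases eq_or_ne θ.1 m₁ with h | h
  · rw [h]
    exact add_lt_add_right (h₂ _ fun h' => hθ (Prod.ext h h')) _
  · exact add_lt_add_of_lt_of_le (h₁ _ h) hle₂

end

theorem identifiable_point_exists (a₁ b₁ a₂ b₂ : ℝ) (h₁ : a₁ < b₁) (h₂ : a₂ < b₂)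
    (g : ℝ × ℝ → ℝ)
    (hg : ∀ θ : ℝ × ℝ, g θ =
      Real.log (∫ x in a₁..b₁, (Real.sqrt (2 * π))⁻¹ * Real.exp (-(x - θ.1) ^ 2 / 2)) +
      Real.log (∫ x in a₂..b₂, (Real.sqrt (2 * π))⁻¹ * Real.exp (-(x - θ.2) ^ 2 / 2))) :
    ConcaveOn ℝ Set.univ g ∧
    ∀ θ : ℝ × ℝ, θ ≠ ((a₁ + b₁) / 2, (a₂ + b₂) / 2) →
      g θ < g ((a₁ + b₁) / 2, (a₂ + b₂) / 2) := by
  set f₁ := logGaussianIntervalProb a₁ b₁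
  set f₂ := logGaussianIntervalProb a₂ b₂
  obtain rfl : g = fun θ => f₁ θ.1 + f₂ θ.2 := funext hg
  refine ⟨?_, fun θ hθ => add_lt_add_of_ne_of_isStrictMax (f₁ := f₁) (f₂ := f₂)
    (fun t ht => logGaussianIntervalProb_lt_midpoint h₁ ht)
    (fun t ht => logGaussianIntervalProb_lt_midpoint h₂ ht) hθ⟩
  exact ((concaveOn_logGaussianIntervalProb h₁).comp_linearMap (LinearMap.fst ℝ ℝ ℝ)).add
    ((concaveOn_logGaussianIntervalProb h₂).comp_linearMap (LinearMap.snd ℝ ℝ ℝ))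
end
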